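/- Let X ⊂ ℝ^d (d ≥ 1) be a compact convex set with nonempty interior such that X ⊆ B(x₀, R) for some x₀ and R > 0, and let S be the random-direction kernel on X. Then for every x ∈ X and every measurable set A ⊆ X, S(x, A) ≥ ∫_A (c_d · ‖u − x‖^{d-1} · 2R)^{-1} du, where the integral is with respect to d-dimensional Lebesgue measure and c_d = 2π^{d/2}/Γ(d/2) is the surface area of the unit sphere S^{d-1}. -/

import Mathlib

/-!
Integrate the density in polar coordinates centred at `x`: the factor `‖u - x‖^(d-1)` cancels
the Jacobian `t^(d-1)`, so the left-hand side becomes `(2R)⁻¹` times the average over directions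
`e` of the length of the ray `{t > 0 | x + t • e ∈ A}`. Each chord of `X` has length at most
`2R`, hence the uniform measure on it gives `A` mass at least `(2R)⁻¹` times that length.
-/

open MeasureTheory

/-- The uniform probability measure `ν_{x,e}` on the chord `{x + t·e : t ∈ ℝ} ∩ X` of `X`
through `x` in direction `e` (a unit vector): the pushforward under `t ↦ x + t·e` of the
normalized Lebesgue measure on `{t : x + t·e ∈ X}`, or the Dirac mass at `x` if the chord
is degenerate. -/
noncomputable def chordMeasure {d : ℕ} (X : Set (EuclideanSpace ℝ (Fin d)))
    (e x : EuclideanSpace ℝ (Fin d)) : Measure (EuclideanSpace ℝ (Fin d)) :=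
  if volume {t : ℝ | x + t • e ∈ X} = 0 then Measure.dirac x
  else (volume {t : ℝ | x + t • e ∈ X})⁻¹ •
    Measure.map (fun t : ℝ => x + t • e) (volume.restrict {t : ℝ | x + t • e ∈ X})

/-- The uniform (rotation-invariant) probability measure `σ` on the unit sphere
`S^{d-1} ⊂ ℝ^d`, obtained by normalizing the sphere measure induced by Lebesgue measure. -/
noncomputable def sphereUniform (d : ℕ) :
    Measure (Metric.sphere (0 : EuclideanSpace ℝ (Fin d)) 1) :=
  ((volume : Measure (EuclideanSpace ℝ (Fin d))).toSphere Set.univ)⁻¹ •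
    (volume : Measure (EuclideanSpace ℝ (Fin d))).toSphere

open Set Metric Module
open scoped ENNReal

section Chord

variable {E : Type*} [NormedAddCommGroup E] [NormedSpace ℝ E]

lemma dist_add_smul_add_smul {e : E} (he : ‖e‖ = 1) (x : E) (s t : ℝ) :
    dist (x + s • e) (x + t • e) = dist s t := by
  rw [dist_add_left, dist_eq_norm, ← sub_smul, norm_smul, he, mul_one, Real.dist_eq,
    Real.norm_eq_abs]

lemma volume_setOf_add_smul_mem_le {X : Set E} {x₀ : E} {R : ℝ}
    (hX : X ⊆ closedBall x₀ R) {e : E} (he : ‖e‖ = 1) (x : E) :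
    volume {t : ℝ | x + t • e ∈ X} ≤ ENNReal.ofReal (2 * R) := by
  refine (Real.volume_le_diam _).trans (ediam_le_of_forall_dist_le fun s hs t ht => ?_)
  rw [← dist_add_smul_add_smul he x]
  linarith [dist_triangle_right (x + s • e) (x + t • e) x₀, mem_closedBall.1 (hX hs),
    mem_closedBall.1 (hX ht)]

end Chord

lemma inv_mul_volume_le_chordMeasure {d : ℕ} {X A : Set (EuclideanSpace ℝ (Fin d))}
    (hAX : A ⊆ X) (hA : MeasurableSet A) (e x : EuclideanSpace ℝ (Fin d)) {L : ℝ≥0∞}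
    (hL : volume {t : ℝ | x + t • e ∈ X} ≤ L) :
    L⁻¹ * volume {t : ℝ | x + t • e ∈ A} ≤ chordMeasure X e x A := by
  have hline : Measurable fun t : ℝ => x + t • e := by fun_prop
  have hchord : (fun t : ℝ => x + t • e) ⁻¹' A ⊆ {t : ℝ | x + t • e ∈ X} := fun t ht => hAX ht
  rw [chordMeasure]
  split_ifs with h0
  · rw [show volume {t : ℝ | x + t • e ∈ A} = 0 from measure_mono_null hchord h0, mul_zero]
    exact bot_le
  · rw [Measure.smul_apply, smul_eq_mul, Measure.map_apply hline hA,
      Measure.restrict_apply (hline hA), inter_eq_left.2 hchord]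
    exact mul_le_mul_left (ENNReal.inv_le_inv.2 hL) _

section Polar

variable {E : Type*} [NormedAddCommGroup E] [NormedSpace ℝ E] [FiniteDimensional ℝ E]
  [MeasurableSpace E] [BorelSpace E] [Nontrivial E] (μ : Measure E) [μ.IsAddHaarMeasure]

theorem lintegral_eq_lintegral_toSphere_setLIntegral_Ioi {f : E → ℝ≥0∞} (hf : Measurable f) :
    ∫⁻ v, f v ∂μ = ∫⁻ e : sphere (0 : E) 1, (∫⁻ t in Ioi (0 : ℝ),
      ENNReal.ofReal (t ^ (finrank ℝ E - 1)) * f (t • (e : E))) ∂μ.toSphere := by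
  have hpolar : Measurable fun p : sphere (0 : E) 1 × Ioi (0 : ℝ) => (p.2 : ℝ) • (p.1 : E) := by
    fun_prop
  calc ∫⁻ v, f v ∂μ = ∫⁻ v : ({0}ᶜ : Set E), f v ∂μ.comap (↑) := by
        rw [lintegral_subtype_comap (measurableSet_singleton _).compl, restrict_compl_singleton]
    _ = ∫⁻ p, f ((p.2 : ℝ) • (p.1 : E)) ∂μ.toSphere.prod (.volumeIoiPow (finrank ℝ E - 1)) := by
        rw [← μ.measurePreserving_homeomorphUnitSphereProd.lintegral_comp_emb
          (Homeomorph.measurableEmbedding _)]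
        refine lintegral_congr fun v => ?_
        rw [← homeomorphUnitSphereProd_symm_apply_coe, Homeomorph.symm_apply_apply]
    _ = ∫⁻ e, ∫⁻ t : Ioi (0 : ℝ), f ((t : ℝ) • (e : E)) ∂.volumeIoiPow (finrank ℝ E - 1)
          ∂μ.toSphere := lintegral_prod _ (hf.comp hpolar).aemeasurable
    _ = _ := by
        refine lintegral_congr fun e => ?_
        rw [Measure.volumeIoiPow, lintegral_withDensity_eq_lintegral_mul _ (by fun_prop)
          (g := fun t : Ioi (0 : ℝ) => f ((t : ℝ) • (e : E))) (by fun_prop),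
          ← lintegral_subtype_comap measurableSet_Ioi]
        rfl

lemma setLIntegral_inv_norm_sub_pow_eq (x : E) {A : Set E} (hA : MeasurableSet A) :
    ∫⁻ u in A, ENNReal.ofReal ((‖u - x‖ ^ (finrank ℝ E - 1))⁻¹) ∂μ
      = ∫⁻ e : sphere (0 : E) 1, volume ({t : ℝ | x + t • (e : E) ∈ A} ∩ Ioi 0) ∂μ.toSphere := by
  set g := A.indicator fun u => ENNReal.ofReal ((‖u - x‖ ^ (finrank ℝ E - 1))⁻¹)
  have hg : Measurable fun v => g (x + v) := (Measurable.indicator (by fun_prop) hA).comp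
    (measurable_const_add x)
  calc ∫⁻ u in A, ENNReal.ofReal ((‖u - x‖ ^ (finrank ℝ E - 1))⁻¹) ∂μ
        = ∫⁻ v, g (x + v) ∂μ := by rw [lintegral_add_left_eq_self, lintegral_indicator hA]
    _ = ∫⁻ e : sphere (0 : E) 1, (∫⁻ t in Ioi (0 : ℝ),
          {t : ℝ | x + t • (e : E) ∈ A}.indicator 1 t) ∂μ.toSphere := by
        rw [lintegral_eq_lintegral_toSphere_setLIntegral_Ioi μ hg]
        refine lintegral_congr fun e => setLIntegral_congr_fun measurableSet_Ioi fun t ht => ?_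
        have hnorm : ‖x + t • (e : E) - x‖ = t := by
          rw [add_sub_cancel_left, norm_smul, norm_eq_of_mem_sphere e, mul_one,
            Real.norm_of_nonneg ht.out.le]
        simp only [g]
        by_cases hmem : x + t • (e : E) ∈ A
        · rw [indicator_of_mem hmem, indicator_of_mem (show t ∈ {t : ℝ | x + t • (e : E) ∈ A}
            from hmem), hnorm, ← ENNReal.ofReal_mul (pow_pos ht.out _).le,
            mul_inv_cancel₀ (pow_pos ht.out _).ne', Pi.one_apply, ENNReal.ofReal_one]
        · rw [indicator_of_notMem hmem, indicator_of_notMem (show t ∉ {t : ℝ | x + t • (e : E) ∈ A}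
            from hmem), mul_zero]
    _ = _ := by
        refine lintegral_congr fun e => ?_
        have hS : MeasurableSet {t : ℝ | x + t • (e : E) ∈ A} :=
          measurableSet_preimage (by fun_prop) hA
        rw [lintegral_indicator_one hS, Measure.restrict_apply hS]

end Polar

open Real in
theorem EuclideanSpace.volume_toSphere_univ (d : ℕ) :
    (volume : Measure (EuclideanSpace ℝ (Fin d))).toSphere univ
      = ENNReal.ofReal (2 * π ^ ((d : ℝ) / 2) / Gamma ((d : ℝ) / 2)) := by
  rcases Nat.eq_zero_or_pos d with rfl | hd
  · simp [Measure.toSphere_apply_univ]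
  have : Nonempty (Fin d) := ⟨⟨0, hd⟩⟩
  have hd2 : (0 : ℝ) < d / 2 := by positivity
  rw [Measure.toSphere_apply_univ, EuclideanSpace.volume_ball, finrank_euclideanSpace,
    Fintype.card_fin, ENNReal.ofReal_one, one_pow, one_mul, ← ENNReal.ofReal_natCast,
    ← ENNReal.ofReal_mul (by positivity), Gamma_add_one hd2.ne', sqrt_eq_rpow,
    ← rpow_natCast, ← rpow_mul pi_pos.le]
  congr 1
  field_simp

theorem volume_toSphere_eq_smul_sphereUniform (d : ℕ) :
    (volume : Measure (EuclideanSpace ℝ (Fin d))).toSphere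
      = ENNReal.ofReal (2 * Real.pi ^ ((d : ℝ) / 2) / Real.Gamma ((d : ℝ) / 2)) •
        sphereUniform d := by
  rw [sphereUniform, ← EuclideanSpace.volume_toSphere_univ, smul_smul]
  rcases eq_or_ne ((volume : Measure (EuclideanSpace ℝ (Fin d))).toSphere univ) 0 with h | h
  · simp [Measure.measure_univ_eq_zero.1 h]
  · rw [ENNReal.mul_inv_cancel h (measure_ne_top _ _), one_smul]

theorem random_direction_density_lower_bound_general
    {d : ℕ} (hd : 1 ≤ d) (X : Set (EuclideanSpace ℝ (Fin d)))
    (x₀ : EuclideanSpace ℝ (Fin d)) (R : ℝ) (hR : 0 < R)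
    (hout : X ⊆ Metric.closedBall x₀ R) :
    ∀ x ∈ X, ∀ A : Set (EuclideanSpace ℝ (Fin d)), A ⊆ X → MeasurableSet A →
      ∫⁻ u in A,
          ENNReal.ofReal
            ((2 * Real.pi ^ ((d : ℝ) / 2) / Real.Gamma ((d : ℝ) / 2) *
              ‖u - x‖ ^ (d - 1) * (2 * R))⁻¹) ∂volume
        ≤ ∫⁻ e : Metric.sphere (0 : EuclideanSpace ℝ (Fin d)) 1,
            chordMeasure X (↑e) x A ∂(sphereUniform d) := by
  intro x _ A hAX hA
  have : Nontrivial (EuclideanSpace ℝ (Fin d)) :=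
    Module.nontrivial_of_finrank_pos (R := ℝ) (by rwa [finrank_euclideanSpace_fin])
  set c := 2 * Real.pi ^ ((d : ℝ) / 2) / Real.Gamma ((d : ℝ) / 2)
  have hc : 0 < c := by
    have := Real.Gamma_pos_of_pos (by positivity : (0 : ℝ) < d / 2)
    positivity
  have hsplit (u : EuclideanSpace ℝ (Fin d)) :
      ENNReal.ofReal ((c * ‖u - x‖ ^ (d - 1) * (2 * R))⁻¹)
        = ENNReal.ofReal ((c * (2 * R))⁻¹) * ENNReal.ofReal ((‖u - x‖ ^ (d - 1))⁻¹) := by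
    rw [← ENNReal.ofReal_mul (by positivity), mul_right_comm, mul_inv]
  have hconst : ENNReal.ofReal ((c * (2 * R))⁻¹) * ENNReal.ofReal c
      = (ENNReal.ofReal (2 * R))⁻¹ := by
    rw [← ENNReal.ofReal_mul (by positivity), ← ENNReal.ofReal_inv_of_pos (by positivity),
      mul_inv, mul_right_comm, inv_mul_cancel₀ hc.ne', one_mul]
  have hpolar := setLIntegral_inv_norm_sub_pow_eq volume x hA
  rw [finrank_euclideanSpace_fin, volume_toSphere_eq_smul_sphereUniform, lintegral_smul_measure]
    at hpolar
  calc _ = ENNReal.ofReal ((c * (2 * R))⁻¹) * ∫⁻ u in A,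
        ENNReal.ofReal ((‖u - x‖ ^ (d - 1))⁻¹) := by
        simp_rw [hsplit]
        exact lintegral_const_mul' _ _ ENNReal.ofReal_ne_top
    _ = ∫⁻ e : sphere (0 : EuclideanSpace ℝ (Fin d)) 1, (ENNReal.ofReal (2 * R))⁻¹ *
          volume ({t : ℝ | x + t • (e : EuclideanSpace ℝ (Fin d)) ∈ A} ∩ Ioi 0)
          ∂sphereUniform d := by
        rw [hpolar, smul_eq_mul, ← mul_assoc, hconst,
          lintegral_const_mul' _ _ (ENNReal.inv_ne_top.2 (by positivity))]
    _ ≤ _ := lintegral_mono fun e => (mul_le_mul_right (measure_mono inter_subset_left) _).trans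
          (inv_mul_volume_le_chordMeasure hAX hA _ x
            (volume_setOf_add_smul_mem_le hout (norm_eq_of_mem_sphere e) x))

/-- **Pointwise lower density bound for the random-direction kernel.** If the compact convex
body `X ⊂ ℝ^d` satisfies `X ⊆ B(x₀, R)`, then for every `x ∈ X` and measurable `A ⊆ X`,
`S(x, A) ≥ ∫_A (c_d·‖u − x‖^{d-1}·2R)⁻¹ du`, with `c_d = 2π^{d/2}/Γ(d/2)` the surface area
of the unit sphere. -/
theorem random_direction_density_lower_bound
    {d : ℕ} (hd : 1 ≤ d) (X : Set (EuclideanSpace ℝ (Fin d)))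
    (hXc : IsCompact X) (hXconv : Convex ℝ X) (hXint : (interior X).Nonempty)
    (x₀ : EuclideanSpace ℝ (Fin d)) (R : ℝ) (hR : 0 < R)
    (hout : X ⊆ Metric.closedBall x₀ R) :
    ∀ x ∈ X, ∀ A : Set (EuclideanSpace ℝ (Fin d)), A ⊆ X → MeasurableSet A →
      ∫⁻ u in A,
          ENNReal.ofReal
            ((2 * Real.pi ^ ((d : ℝ) / 2) / Real.Gamma ((d : ℝ) / 2) *
              ‖u - x‖ ^ (d - 1) * (2 * R))⁻¹) ∂volume
        ≤ ∫⁻ e : Metric.sphere (0 : EuclideanSpace ℝ (Fin d)) 1,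
            chordMeasure X (↑e) x A ∂(sphereUniform d) :=
  random_direction_density_lower_bound_general hd X x₀ R hR hout
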